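/- Let N ≥ 1 and let P_{XY|AB} be a family of probability distributions on pairs (x,y) ∈ {+1,−1}² indexed by settings a ∈ {0,2,…,2N−2} and b ∈ {1,3,…,2N−1}, satisfying the two-party non-signalling conditions: the marginal distribution of X given (a,b) does not depend on b, and the marginal distribution of Y given (a,b) does not depend on a. Then for every setting a, the variational distance between the marginal distribution P_{X|a} and the uniform distribution on {+1,−1} is at most I_N/2, where I_N is the chained-Bell quantity of P_{XY|AB}. -/

import Mathlib

/-!
Consider the chain of marginals `P(X=1|0), P(Y=1|1), P(X=1|2), …, P(Y=1|2N-1)`, which is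
well defined by non-signalling. Two consecutive ones are the two marginals of one joint
distribution, so they differ by at most its probability of `X ≠ Y`; the first and the last
are the marginals at `(0, 2N-1)` and add up to `1` up to the probability of `X = Y` there.
Going around the chain from `P(X=1|a)` both ways gives `|2 P(X=1|a) - 1| ≤ I_N`.
-/

noncomputable section

open Finset

/-- The two outcomes `+1` and `-1`. -/
def pm : Finset ℤ := {1, -1}

/-- Settings on side A: `{0, 2, 4, …, 2N-2}`. -/
def SA (N : ℕ) : Finset ℕ := (Finset.range N).image (fun k => 2 * k)

/-- Settings on side B: `{1, 3, 5, …, 2N-1}`. -/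
def SB (N : ℕ) : Finset ℕ := (Finset.range N).image (fun k => 2 * k + 1)

/-- Probability that `X = Y` given settings `(a, b)`. -/
def Pagree (P : ℕ → ℕ → ℤ → ℤ → ℝ) (a b : ℕ) : ℝ :=
  P a b 1 1 + P a b (-1) (-1)

/-- Probability that `X ≠ Y` given settings `(a, b)`. -/
def Pdiff (P : ℕ → ℕ → ℤ → ℤ → ℝ) (a b : ℕ) : ℝ :=
  P a b 1 (-1) + P a b (-1) 1

/-- Chained-Bell quantity `I_N` of the family `P_{XY|AB}`:
`I_N = P(X=Y | A=0, B=2N-1) + ∑_{a,b : |a-b|=1} P(X≠Y | A=a, B=b)`. -/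
def IN (P : ℕ → ℕ → ℤ → ℤ → ℝ) (N : ℕ) : ℝ :=
  Pagree P 0 (2 * N - 1) +
    ∑ p ∈ (SA N ×ˢ SB N).filter (fun p => p.1 + 1 = p.2 ∨ p.2 + 1 = p.1),
      Pdiff P p.1 p.2

/-- Marginal distribution of `X` given settings `(a, b)`. -/
def PX (P : ℕ → ℕ → ℤ → ℤ → ℝ) (a b : ℕ) (x : ℤ) : ℝ :=
  ∑ y ∈ pm, P a b x y

/-- Marginal distribution of `Y` given settings `(a, b)`. -/
def PY (P : ℕ → ℕ → ℤ → ℤ → ℝ) (a b : ℕ) (y : ℤ) : ℝ :=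
  ∑ x ∈ pm, P a b x y

lemma sum_pm (f : ℤ → ℝ) : ∑ x ∈ pm, f x = f 1 + f (-1) :=
  sum_pair (by decide)

lemma mem_SA_iff {N a : ℕ} : a ∈ SA N ↔ Even a ∧ a < 2 * N := by
  simp only [SA, mem_image, mem_range, Nat.even_iff]
  constructor
  · rintro ⟨k, hk, rfl⟩
    omega
  · rintro ⟨hev, hlt⟩
    exact ⟨a / 2, by omega, by omega⟩

lemma mem_SB_iff {N b : ℕ} : b ∈ SB N ↔ Odd b ∧ b < 2 * N := by
  simp only [SB, mem_image, mem_range, Nat.odd_iff]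
  constructor
  · rintro ⟨k, hk, rfl⟩
    omega
  · rintro ⟨hodd, hlt⟩
    exact ⟨b / 2, by omega, by omega⟩

lemma abs_two_mul_sub_one_le_chain (c : ℕ → ℝ) {a L : ℕ} (ha : a ≤ L) :
    |2 * c a - 1| ≤ ∑ i ∈ range L, |c i - c (i + 1)| + |c 0 + c L - 1| := by
  have h₁ := dist_le_Ico_sum_dist c (Nat.zero_le a)
  have h₂ := dist_le_Ico_sum_dist c ha
  simp only [Real.dist_eq] at h₁ h₂
  rw [range_eq_Ico, ← sum_Ico_consecutive _ (Nat.zero_le a) ha]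
  calc |2 * c a - 1| = |(c a - c 0) + (c a - c L) + (c 0 + c L - 1)| := by ring_nf
    _ ≤ |c a - c 0| + |c a - c L| + |c 0 + c L - 1| := abs_add_three _ _ _
    _ ≤ _ := by rw [abs_sub_comm (c a)]; linarith

section OneSetting

variable {P : ℕ → ℕ → ℤ → ℤ → ℝ} {a b : ℕ}

lemma abs_PX_sub_PY_le_Pdiff (hpos : ∀ x ∈ pm, ∀ y ∈ pm, 0 ≤ P a b x y) :
    |PX P a b 1 - PY P a b 1| ≤ Pdiff P a b := by
  have h₁ := hpos 1 (by decide) (-1) (by decide)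
  have h₂ := hpos (-1) (by decide) 1 (by decide)
  simp only [PX, PY, Pdiff, sum_pm]
  rw [abs_le]
  constructor <;> linarith

lemma abs_PX_add_PY_sub_one_le_Pagree (hpos : ∀ x ∈ pm, ∀ y ∈ pm, 0 ≤ P a b x y)
    (hsum : ∑ x ∈ pm, ∑ y ∈ pm, P a b x y = 1) :
    |PX P a b 1 + PY P a b 1 - 1| ≤ Pagree P a b := by
  have h₁ := hpos 1 (by decide) 1 (by decide)
  have h₂ := hpos (-1) (by decide) (-1) (by decide)
  simp only [PX, PY, Pagree, sum_pm] at hsum ⊢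
  rw [abs_le]
  constructor <;> linarith

lemma PX_neg_one_eq (hsum : ∑ x ∈ pm, ∑ y ∈ pm, P a b x y = 1) :
    PX P a b (-1) = 1 - PX P a b 1 := by
  simp only [PX, sum_pm] at hsum ⊢
  linarith

end OneSetting

lemma half_mul_abs_add_abs_eq_of_add_eq_one {p q : ℝ} (h : p + q = 1) :
    1 / 2 * (|p - 1 / 2| + |q - 1 / 2|) = |2 * p - 1| / 2 := by
  rw [show q - 1 / 2 = -((2 * p - 1) / 2) by linarith,
    show p - 1 / 2 = (2 * p - 1) / 2 by ring, abs_neg, abs_div, abs_two]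
  ring

def chainMarginal (P : ℕ → ℕ → ℤ → ℤ → ℝ) (i : ℕ) : ℝ :=
  if Even i then PX P i 1 1 else PY P 0 i 1

def chainEdge (i : ℕ) : ℕ × ℕ :=
  if Even i then (i, i + 1) else (i + 1, i)

lemma chainEdge_mem {N i : ℕ} (hi : i + 1 < 2 * N) :
    chainEdge i ∈ (SA N ×ˢ SB N).filter (fun p => p.1 + 1 = p.2 ∨ p.2 + 1 = p.1) := by
  unfold chainEdge
  split_ifs with h
  · simp only [mem_filter, mem_product, mem_SA_iff, mem_SB_iff, h, Even.add_one h, true_and,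
      true_or, and_true]
    omega
  · rw [Nat.not_even_iff_odd] at h
    simp only [mem_filter, mem_product, mem_SA_iff, mem_SB_iff, h, Odd.add_one h, true_and,
      or_true, and_true]
    omega

lemma chainEdge_injective : Function.Injective chainEdge := by
  have hmin : ∀ i, min (chainEdge i).1 (chainEdge i).2 = i := by
    intro i
    unfold chainEdge
    split_ifs <;> simp
  intro i j hij
  rw [← hmin i, ← hmin j, hij]

section Chain

variable {N : ℕ} {P : ℕ → ℕ → ℤ → ℤ → ℝ}

lemma chainMarginal_of_mem_SA (hNSX : ∀ a ∈ SA N, ∀ b ∈ SB N, ∀ b' ∈ SB N, ∀ x ∈ pm,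
      PX P a b x = PX P a b' x) {a b : ℕ} (ha : a ∈ SA N) (hb : b ∈ SB N) :
    chainMarginal P a = PX P a b 1 := by
  obtain ⟨hev, hlt⟩ := mem_SA_iff.mp ha
  rw [chainMarginal, if_pos hev]
  exact hNSX a ha 1 (mem_SB_iff.mpr ⟨odd_one, by omega⟩) b hb 1 (by decide)

lemma chainMarginal_of_mem_SB (hNSY : ∀ a ∈ SA N, ∀ a' ∈ SA N, ∀ b ∈ SB N, ∀ y ∈ pm,
      PY P a b y = PY P a' b y) {a b : ℕ} (ha : a ∈ SA N) (hb : b ∈ SB N) :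
    chainMarginal P b = PY P a b 1 := by
  obtain ⟨hodd, hlt⟩ := mem_SB_iff.mp hb
  rw [chainMarginal, if_neg (Nat.not_even_iff_odd.mpr hodd)]
  exact hNSY _ (mem_SA_iff.mpr ⟨Even.zero, by omega⟩) a ha b hb 1 (by decide)

lemma abs_chainMarginal_sub_succ_le
    (hpos : ∀ a ∈ SA N, ∀ b ∈ SB N, ∀ x ∈ pm, ∀ y ∈ pm, 0 ≤ P a b x y)
    (hNSX : ∀ a ∈ SA N, ∀ b ∈ SB N, ∀ b' ∈ SB N, ∀ x ∈ pm, PX P a b x = PX P a b' x)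
    (hNSY : ∀ a ∈ SA N, ∀ a' ∈ SA N, ∀ b ∈ SB N, ∀ y ∈ pm, PY P a b y = PY P a' b y)
    {i : ℕ} (hi : i + 1 < 2 * N) :
    |chainMarginal P i - chainMarginal P (i + 1)| ≤ Pdiff P (chainEdge i).1 (chainEdge i).2 := by
  obtain ⟨hab, -⟩ := mem_filter.mp (chainEdge_mem hi)
  obtain ⟨ha, hb⟩ := mem_product.mp hab
  by_cases h : Even i
  · simp only [chainEdge, if_pos h] at ha hb ⊢
    rw [chainMarginal_of_mem_SA hNSX ha hb, chainMarginal_of_mem_SB hNSY ha hb]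
    exact abs_PX_sub_PY_le_Pdiff (hpos _ ha _ hb)
  · simp only [chainEdge, if_neg h] at ha hb ⊢
    rw [chainMarginal_of_mem_SB hNSY ha hb, chainMarginal_of_mem_SA hNSX ha hb, abs_sub_comm]
    exact abs_PX_sub_PY_le_Pdiff (hpos _ ha _ hb)

lemma sum_Pdiff_chainEdge_le_sum_Pdiff
    (hpos : ∀ a ∈ SA N, ∀ b ∈ SB N, ∀ x ∈ pm, ∀ y ∈ pm, 0 ≤ P a b x y) :
    ∑ i ∈ range (2 * N - 1), Pdiff P (chainEdge i).1 (chainEdge i).2 ≤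
      ∑ p ∈ (SA N ×ˢ SB N).filter (fun p => p.1 + 1 = p.2 ∨ p.2 + 1 = p.1),
        Pdiff P p.1 p.2 := by
  rw [← sum_image (f := fun p : ℕ × ℕ => Pdiff P p.1 p.2) fun i _ j _ hij =>
    chainEdge_injective hij]
  refine sum_le_sum_of_subset_of_nonneg ?_ fun p hp _ => ?_
  · intro p hp
    obtain ⟨i, hi, rfl⟩ := mem_image.mp hp
    exact chainEdge_mem (by rw [mem_range] at hi; omega)
  · obtain ⟨ha, hb⟩ := mem_product.mp (mem_filter.mp hp).1
    have h₁ := hpos _ ha _ hb 1 (by decide) (-1) (by decide)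
    have h₂ := hpos _ ha _ hb (-1) (by decide) 1 (by decide)
    rw [Pdiff]
    positivity

lemma sum_abs_chainMarginal_add_le_IN (hN : 1 ≤ N)
    (hpos : ∀ a ∈ SA N, ∀ b ∈ SB N, ∀ x ∈ pm, ∀ y ∈ pm, 0 ≤ P a b x y)
    (hsum : ∀ a ∈ SA N, ∀ b ∈ SB N, ∑ x ∈ pm, ∑ y ∈ pm, P a b x y = 1)
    (hNSX : ∀ a ∈ SA N, ∀ b ∈ SB N, ∀ b' ∈ SB N, ∀ x ∈ pm,
      PX P a b x = PX P a b' x)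
    (hNSY : ∀ a ∈ SA N, ∀ a' ∈ SA N, ∀ b ∈ SB N, ∀ y ∈ pm,
      PY P a b y = PY P a' b y) :
    ∑ i ∈ range (2 * N - 1), |chainMarginal P i - chainMarginal P (i + 1)| +
      |chainMarginal P 0 + chainMarginal P (2 * N - 1) - 1| ≤ IN P N := by
  have h0 : 0 ∈ SA N := mem_SA_iff.mpr ⟨Even.zero, by omega⟩
  have hL : 2 * N - 1 ∈ SB N := mem_SB_iff.mpr ⟨⟨N - 1, by omega⟩, by omega⟩
  have hlinks : ∑ i ∈ range (2 * N - 1), |chainMarginal P i - chainMarginal P (i + 1)| ≤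
      ∑ i ∈ range (2 * N - 1), Pdiff P (chainEdge i).1 (chainEdge i).2 :=
    sum_le_sum fun i hi =>
      abs_chainMarginal_sub_succ_le hpos hNSX hNSY (by rw [mem_range] at hi; omega)
  have hclosing : |chainMarginal P 0 + chainMarginal P (2 * N - 1) - 1| ≤
      Pagree P 0 (2 * N - 1) := by
    rw [chainMarginal_of_mem_SA hNSX h0 hL, chainMarginal_of_mem_SB hNSY h0 hL]
    exact abs_PX_add_PY_sub_one_le_Pagree (hpos _ h0 _ hL) (hsum _ h0 _ hL)
  have hbell := sum_Pdiff_chainEdge_le_sum_Pdiff hpos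
  rw [IN]
  linarith

end Chain

theorem statement2_general (N : ℕ)
    (P : ℕ → ℕ → ℤ → ℤ → ℝ)
    (hpos : ∀ a ∈ SA N, ∀ b ∈ SB N, ∀ x ∈ pm, ∀ y ∈ pm, 0 ≤ P a b x y)
    (hsum : ∀ a ∈ SA N, ∀ b ∈ SB N, ∑ x ∈ pm, ∑ y ∈ pm, P a b x y = 1)
    (hNSX : ∀ a ∈ SA N, ∀ b ∈ SB N, ∀ b' ∈ SB N, ∀ x ∈ pm,
      PX P a b x = PX P a b' x)
    (hNSY : ∀ a ∈ SA N, ∀ a' ∈ SA N, ∀ b ∈ SB N, ∀ y ∈ pm,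
      PY P a b y = PY P a' b y) :
    ∀ a ∈ SA N, ∀ b ∈ SB N,
      (1 / 2) * (|PX P a b 1 - 1 / 2| + |PX P a b (-1) - 1 / 2|) ≤ IN P N / 2 := by
  intro a ha b hb
  have haN : a < 2 * N := (mem_SA_iff.mp ha).2
  have hmarg : PX P a b 1 + PX P a b (-1) = 1 := by
    rw [PX_neg_one_eq (hsum a ha b hb)]
    ring
  rw [half_mul_abs_add_abs_eq_of_add_eq_one hmarg, ← chainMarginal_of_mem_SA hNSX ha hb]
  have hchain :=
    (abs_two_mul_sub_one_le_chain (chainMarginal P) (show a ≤ 2 * N - 1 by omega)).trans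
      (sum_abs_chainMarginal_add_le_IN (by omega) hpos hsum hNSX hNSY)
  linarith

/-- For any two-party non-signalling family `P_{XY|AB}` of distributions
on `{+1,-1}²`, the variational distance of the marginal `P_{X|a}` from the uniform
distribution on `{+1,-1}` is at most `I_N / 2`. -/
theorem statement2 (N : ℕ) (hN : 1 ≤ N)
    (P : ℕ → ℕ → ℤ → ℤ → ℝ)
    (hpos : ∀ a ∈ SA N, ∀ b ∈ SB N, ∀ x ∈ pm, ∀ y ∈ pm, 0 ≤ P a b x y)
    (hsum : ∀ a ∈ SA N, ∀ b ∈ SB N, ∑ x ∈ pm, ∑ y ∈ pm, P a b x y = 1)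
    (hNSX : ∀ a ∈ SA N, ∀ b ∈ SB N, ∀ b' ∈ SB N, ∀ x ∈ pm,
      PX P a b x = PX P a b' x)
    (hNSY : ∀ a ∈ SA N, ∀ a' ∈ SA N, ∀ b ∈ SB N, ∀ y ∈ pm,
      PY P a b y = PY P a' b y) :
    ∀ a ∈ SA N, ∀ b ∈ SB N,
      (1 / 2) * (|PX P a b 1 - 1 / 2| + |PX P a b (-1) - 1 / 2|) ≤ IN P N / 2 :=
  statement2_general N P hpos hsum hNSX hNSY
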